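/- arXiv:math/0109219 — 2 statements merged into one kernel-verified Lean document; each statement's English description precedes it below -/
import Mathlib

section
/- Fix k ≥ 3. For all n ≥ k−1, the number of permutations of [n] avoiding 132, 213, and 23…k1 equals 1 plus the sum over i from 1 to k−2 of the number of permutations of [n−i] avoiding 132, 213, and 23…k1. -/
/-- A permutation `π` of `Fin n` avoids the pattern given (in one-line notation) by the
list `s` when there is no increasing choice of positions along which the values of `π`
have the same pairwise comparisons as the entries of `s`. -/
def AvoidsPat {n : ℕ} (π : Equiv.Perm (Fin n)) (s : List ℕ) : Prop :=
  ¬ ∃ f : Fin s.length ↪o Fin n,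
      ∀ i j : Fin s.length, s.get i < s.get j ↔ π (f i) < π (f j)

/-- The number of permutations of `Fin n` avoiding every pattern in `R`. -/
noncomputable def AvoidCount (R : List (List ℕ)) (n : ℕ) : ℕ :=
  Nat.card {π : Equiv.Perm (Fin n) // ∀ s ∈ R, AvoidsPat π s}

/-- The `k`-generalized Fibonacci numbers: `F_{k,n} = 0` for `n ≤ 0`, `F_{k,1} = 1`,
`F_{k,n} = ∑_{i=1}^{k} F_{k,n-i}` for `n ≥ 2` (terms with nonpositive index are `0`). -/
def genFib (k : ℕ) : ℕ → ℕ
  | 0 => 0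
  | 1 => 1
  | n + 2 => ∑ i ∈ Finset.range k, genFib k (n + 1 - i)

/-!
Avoiding `132` and `213` means being reverse layered, i.e. a skew sum `ι_{a₁} ⊖ ι_{a₂} ⊖ ⋯`
of increasing runs of consecutive values: if `π i < π j` with `i < j`, the two patterns force
`π` to map the positions strictly between `i` and `j` onto the values strictly between `π i`
and `π j`, so an ascent spans as many values as positions. In a reverse layered permutation
an occurrence of `23⋯k1` is exactly a layer of length at least `k - 1` that is not the last
one. Removing the first layer, of length `i`, leaves a permutation of the same kind on
`n - i` points; either that layer is everything (the identity, the term `1`) or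
`i ≤ k - 2 < n`.
-/

open Finset

lemma OrderEmbedding.val_add_sub_le {m n : ℕ} (f : Fin m ↪o Fin n) {i j : Fin m}
    (hij : i ≤ j) : (f i : ℕ) + (j - i) ≤ f j := by
  have hsub : (Icc i j).map f.toEmbedding ⊆ Icc (f i) (f j) := by
    intro x hx
    obtain ⟨y, hy, rfl⟩ := mem_map.1 hx
    simpa using hy
  have := card_le_card hsub
  simp only [card_map, Fin.card_Icc] at this
  have := f.monotone hij
  simp only [Fin.le_def] at hij this
  omega

namespace Equiv.Perm

variable {n : ℕ} {π : Perm (Fin n)}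

lemma avoidsPat_132_iff :
    AvoidsPat π [1, 3, 2] ↔
      ∀ x y z : Fin n, x < y → y < z → ¬ (π x < π z ∧ π z < π y) := by
  refine ⟨fun h x y z hxy hyz ⟨hxz, hzy⟩ => h ?_, fun h ⟨f, hf⟩ => ?_⟩
  · refine ⟨.ofStrictMono ![x, y, z] (by simp [hxy, hyz]), fun i j => ?_⟩
    have hxy' := hxz.trans hzy
    fin_cases i <;> fin_cases j <;> simp [hxy', hxz, hzy, hxy'.not_gt, hxz.not_gt, hzy.not_gt]
  · exact h (f 0) (f 1) (f 2) (f.strictMono (by decide)) (f.strictMono (by decide))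
      ⟨(hf 0 2).1 (by decide), (hf 2 1).1 (by decide)⟩

lemma avoidsPat_213_iff :
    AvoidsPat π [2, 1, 3] ↔
      ∀ x y z : Fin n, x < y → y < z → ¬ (π y < π x ∧ π x < π z) := by
  refine ⟨fun h x y z hxy hyz ⟨hyx, hxz⟩ => h ?_, fun h ⟨f, hf⟩ => ?_⟩
  · refine ⟨.ofStrictMono ![x, y, z] (by simp [hxy, hyz]), fun i j => ?_⟩
    have hyz' := hyx.trans hxz
    fin_cases i <;> fin_cases j <;> simp [hyz', hyx, hxz, hyz'.not_gt, hyx.not_gt, hxz.not_gt]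
  · exact h (f 0) (f 1) (f 2) (f.strictMono (by decide)) (f.strictMono (by decide))
      ⟨(hf 1 0).1 (by decide), (hf 0 2).1 (by decide)⟩

/-- `π` is a skew sum of increasing runs of consecutive values. -/
def IsReverseLayered (π : Perm (Fin n)) : Prop :=
  ∀ i j : Fin n, i < j → π i < π j → (π j : ℕ) + i = π i + j

lemma map_Ioo_of_avoidsPat (h132 : AvoidsPat π [1, 3, 2]) (h213 : AvoidsPat π [2, 1, 3])
    {i j : Fin n} (hij : i < j) (h : π i < π j) :
    (Ioo i j).map π.toEmbedding = Ioo (π i) (π j) := by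
  rw [avoidsPat_132_iff] at h132
  rw [avoidsPat_213_iff] at h213
  ext v
  obtain ⟨p, rfl⟩ := π.surjective v
  simp only [mem_map, mem_Ioo, Equiv.coe_toEmbedding, π.injective.eq_iff, exists_eq_right]
  refine ⟨fun ⟨hip, hpj⟩ => ⟨?_, ?_⟩, fun ⟨hip, hpj⟩ => ⟨?_, ?_⟩⟩
  · by_contra! hpi
    exact h213 i p j hip hpj ⟨hpi.lt_of_ne (π.injective.ne hip.ne'), h⟩
  · by_contra! hjp
    exact h132 i p j hip hpj ⟨h, hjp.lt_of_ne (π.injective.ne hpj.ne')⟩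
  · by_contra! hpi
    exact h213 p i j (hpi.lt_of_ne (π.injective.ne_iff.1 hip.ne')) hij ⟨hip, hpj⟩
  · by_contra! hjp
    exact h132 i j p hij (hjp.lt_of_ne (π.injective.ne_iff.1 hpj.ne')) ⟨hip, hpj⟩

theorem isReverseLayered_iff :
    IsReverseLayered π ↔ AvoidsPat π [1, 3, 2] ∧ AvoidsPat π [2, 1, 3] := by
  refine ⟨fun hπ => ⟨?_, ?_⟩, fun ⟨h132, h213⟩ i j hij h => ?_⟩
  · refine avoidsPat_132_iff.2 fun x y z hxy hyz ⟨hxz, hzy⟩ => ?_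
    have := hπ x y hxy (hxz.trans hzy)
    have := hπ x z (hxy.trans hyz) hxz
    simp only [Fin.lt_def] at hyz hzy
    omega
  · refine avoidsPat_213_iff.2 fun x y z hxy hyz ⟨hyx, hxz⟩ => ?_
    have := hπ y z hyz (hyx.trans hxz)
    have := hπ x z (hxy.trans hyz) hxz
    simp only [Fin.lt_def] at hxy hyx
    omega
  · have := congrArg card (map_Ioo_of_avoidsPat h132 h213 hij h)
    simp only [card_map, Fin.card_Ioo] at this
    simp only [Fin.lt_def] at hij h
    omega

lemma IsReverseLayered.apply_of_le_of_le (hπ : IsReverseLayered π) {a l b : Fin n}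
    (hal : a ≤ l) (hlb : l ≤ b) (h : π a ≤ π b) : (π l : ℕ) = π a + (l - a) := by
  rcases hal.eq_or_lt with rfl | hal
  · simp
  have hab := hal.trans_le hlb
  have h' : π a < π b := h.lt_of_ne (π.injective.ne hab.ne)
  rcases (π.injective.ne hal.ne').lt_or_gt with hla | hal'
  · rcases hlb.eq_or_lt with rfl | hlb
    · exact absurd h' (lt_asymm hla)
    have := hπ l b hlb (hla.trans h')
    have := hπ a b hab h'
    simp only [Fin.lt_def] at hal hla
    omega
  · have := hπ a l hal hal'
    simp only [Fin.lt_def] at hal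
    omega

/-- For reverse layered `π`: some layer other than the last one has more than `r` entries. -/
def HasRunThenDrop (π : Perm (Fin n)) (r : ℕ) : Prop :=
  ∃ a b c : Fin n, (b : ℕ) = a + r ∧ b < c ∧ (π b : ℕ) = π a + r ∧ π c < π a

/-- The pattern `23⋯k1` for `k = r + 2`. -/
def runDropPattern (r : ℕ) : List ℕ :=
  (List.range (r + 1)).map (· + 2) ++ [1]

@[simp]
lemma length_runDropPattern (r : ℕ) : (runDropPattern r).length = r + 2 := by
  simp [runDropPattern]

lemma get_runDropPattern (r : ℕ) (i : Fin (runDropPattern r).length) :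
    (runDropPattern r).get i = if (i : ℕ) ≤ r then (i : ℕ) + 2 else 1 := by
  obtain ⟨i, hi⟩ := i
  simp only [length_runDropPattern] at hi
  simp only [runDropPattern, List.get_eq_getElem, List.getElem_append, List.getElem_map,
    List.getElem_range, List.length_map, List.length_range, List.getElem_singleton]
  split_ifs <;> omega

lemma IsReverseLayered.not_avoidsPat_of_hasRunThenDrop (hπ : IsReverseLayered π) {r : ℕ}
    (h : HasRunThenDrop π r) : ¬ AvoidsPat π (runDropPattern r) := by
  obtain ⟨a, b, c, hb, hbc, hab, hca⟩ := h
  simp only [Fin.lt_def] at hbc hca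
  have hpos (i : ℕ) (hi : i ≤ r) : (a : ℕ) + i < n := by omega
  let g (i : Fin (runDropPattern r).length) : Fin n :=
    if hi : (i : ℕ) ≤ r then ⟨a + i, hpos i hi⟩ else c
  have hg : StrictMono g := fun i j hij => by
    have := j.isLt
    simp only [g]
    simp only [Fin.lt_def, length_runDropPattern] at hij this
    split_ifs <;> simp only [Fin.lt_def] <;> omega
  have hπg (i) : (π (g i) : ℕ) = if (i : ℕ) ≤ r then (π a : ℕ) + i else π c := by
    simp only [g]
    split_ifs with hi
    · simpa using hπ.apply_of_le_of_le (a := a) (l := ⟨a + i, hpos i hi⟩) (b := b)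
        (Fin.le_def.2 (by simp)) (Fin.le_def.2 (by simp; omega)) (Fin.le_def.2 (by omega))
    · rfl
  refine fun hA => hA ⟨.ofStrictMono g hg, fun i j => ?_⟩
  rw [OrderEmbedding.coe_ofStrictMono, Fin.lt_def, hπg, hπg, get_runDropPattern,
    get_runDropPattern]
  have hi : (i : ℕ) < r + 2 := by simpa using i.isLt
  have hj : (j : ℕ) < r + 2 := by simpa using j.isLt
  split_ifs <;> omega

lemma IsReverseLayered.hasRunThenDrop_of_orderEmbedding (hπ : IsReverseLayered π) {r : ℕ}
    (f : Fin (runDropPattern r).length ↪o Fin n)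
    (hf : ∀ i j, (runDropPattern r).get i < (runDropPattern r).get j ↔ π (f i) < π (f j)) :
    HasRunThenDrop π r := by
  let i₀ : Fin (runDropPattern r).length := ⟨0, by simp⟩
  let iᵣ : Fin (runDropPattern r).length := ⟨r, by simp⟩
  let i' : Fin (runDropPattern r).length := ⟨r + 1, by simp⟩
  have hrun : π (f i₀) ≤ π (f iᵣ) := not_lt.1 fun hlt => by
    have := (hf iᵣ i₀).2 hlt
    rw [get_runDropPattern, get_runDropPattern] at this
    simp [i₀, iᵣ] at this
  have hdrop : π (f i') < π (f i₀) := (hf i' i₀).1 <| by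
    rw [get_runDropPattern, get_runDropPattern]
    simp [i₀, i']
  have hgap : (f i₀ : ℕ) + (r - 0) ≤ f iᵣ :=
    f.val_add_sub_le (i := i₀) (j := iᵣ) (Fin.le_def.2 (Nat.zero_le r))
  have hlast : f iᵣ < f i' := f.strictMono (Fin.lt_def.2 (Nat.lt_succ_self r))
  simp only [Fin.lt_def] at hlast
  let b : Fin n := ⟨f i₀ + r, by omega⟩
  have hb := hπ.apply_of_le_of_le (l := b) (Fin.le_def.2 (by simp [b])) (Fin.le_def.2 hgap)
    hrun
  exact ⟨f i₀, b, f i', rfl, Fin.lt_def.2 (by simp only [b]; omega), by simpa [b] using hb,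
    hdrop⟩

theorem IsReverseLayered.avoidsPat_runDropPattern_iff (hπ : IsReverseLayered π) (r : ℕ) :
    AvoidsPat π (runDropPattern r) ↔ ¬ HasRunThenDrop π r :=
  ⟨fun h hr => hπ.not_avoidsPat_of_hasRunThenDrop hr h,
    fun h ⟨f, hf⟩ => h (hπ.hasRunThenDrop_of_orderEmbedding f hf)⟩

/-- The skew sum `ι_i ⊖ τ`: the first `i` positions carry the top `i` values in increasing
order. -/
noncomputable def prependBlock (i : ℕ) (τ : Perm (Fin (n - i))) : Perm (Fin n) :=
  Equiv.ofBijective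
    (fun x => if hx : (x : ℕ) < i then ⟨n - i + x, by omega⟩
      else Fin.castLE (n.sub_le i) (τ ⟨x - i, by omega⟩))
    (Finite.injective_iff_bijective.1 fun x y hxy => by
      simp only [Fin.ext_iff] at hxy ⊢
      split_ifs at hxy with hx hy hy
      · simp at hxy; omega
      · have := (τ ⟨y - i, by omega⟩).isLt; simp at hxy; omega
      · have := (τ ⟨x - i, by omega⟩).isLt; simp at hxy; omega
      · have := Fin.ext_iff.1 (τ.injective (Fin.ext hxy))
        simp at this
        omega)

section PrependBlock

variable {i : ℕ} (τ : Perm (Fin (n - i)))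

lemma prependBlock_apply_of_lt {x : Fin n} (hx : (x : ℕ) < i) :
    (prependBlock i τ x : ℕ) = n - i + x := by
  simp [prependBlock, hx]

lemma prependBlock_apply_of_le {x : Fin n} (hx : i ≤ (x : ℕ)) :
    (prependBlock i τ x : ℕ) = τ ⟨x - i, by omega⟩ := by
  simp [prependBlock, hx.not_gt]

variable {τ}

lemma prependBlock_apply_add (y : Fin (n - i)) :
    (prependBlock i τ ⟨y + i, by omega⟩ : ℕ) = τ y := by
  rw [prependBlock_apply_of_le τ (by simp)]
  simp

lemma prependBlock_injective : Function.Injective (prependBlock (n := n) i) := fun τ τ' h =>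
  Equiv.ext fun y => Fin.ext <| by
    have := congrArg (fun σ => (σ ⟨y + i, by omega⟩ : ℕ)) h
    rwa [prependBlock_apply_add, prependBlock_apply_add] at this

lemma isReverseLayered_prependBlock_iff :
    IsReverseLayered (prependBlock i τ) ↔ IsReverseLayered τ := by
  refine ⟨fun hσ x y hxy h => ?_, fun hτ x y hxy h => ?_⟩
  · have := hσ ⟨x + i, by omega⟩ ⟨y + i, by omega⟩ (Fin.lt_def.2 (by simpa using hxy))
      (by simpa only [Fin.lt_def, prependBlock_apply_add] using h)
    simp only [prependBlock_apply_add] at this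
    omega
  · simp only [Fin.lt_def] at hxy h
    by_cases hx : (x : ℕ) < i
    · by_cases hy : (y : ℕ) < i
      · rw [prependBlock_apply_of_lt τ hx, prependBlock_apply_of_lt τ hy]
        omega
      · rw [prependBlock_apply_of_lt τ hx, prependBlock_apply_of_le τ (not_lt.1 hy)] at h
        have := (τ ⟨y - i, by omega⟩).isLt
        omega
    · rw [prependBlock_apply_of_le τ (not_lt.1 hx), prependBlock_apply_of_le τ (by omega)]
        at h ⊢
      have := hτ ⟨x - i, by omega⟩ ⟨y - i, by omega⟩ (Fin.lt_def.2 (by simp; omega)) h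
      simp only at this
      omega

lemma hasRunThenDrop_prependBlock_iff {r : ℕ} :
    HasRunThenDrop (prependBlock i τ) r ↔ HasRunThenDrop τ r ∨ (r < i ∧ i < n) := by
  refine ⟨fun ⟨a, b, c, hb, hbc, hab, hca⟩ => ?_, ?_⟩
  · simp only [Fin.lt_def] at hbc hca
    by_cases ha : i ≤ (a : ℕ)
    · left
      rw [prependBlock_apply_of_le τ ha, prependBlock_apply_of_le τ (x := b) (by omega)] at hab
      rw [prependBlock_apply_of_le τ ha, prependBlock_apply_of_le τ (x := c) (by omega)] at hca
      exact ⟨⟨a - i, by omega⟩, ⟨b - i, by omega⟩, ⟨c - i, by omega⟩, by simp; omega,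
        Fin.lt_def.2 (by simp; omega), by simpa using hab, Fin.lt_def.2 hca⟩
    rw [prependBlock_apply_of_lt τ (not_le.1 ha)] at hab hca
    by_cases hc : (c : ℕ) < i
    · rw [prependBlock_apply_of_lt τ hc] at hca
      omega
    · rw [prependBlock_apply_of_le τ (not_lt.1 hc)] at hca
      by_cases hbi : (b : ℕ) < i
      · right
        omega
      · rw [prependBlock_apply_of_le τ (not_lt.1 hbi)] at hab
        have := (τ ⟨b - i, by omega⟩).isLt
        omega
  · rintro (⟨a, b, c, hb, hbc, hab, hca⟩ | ⟨hri, hin⟩)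
    · refine ⟨⟨a + i, by omega⟩, ⟨b + i, by omega⟩, ⟨c + i, by omega⟩, by simp; omega,
        Fin.lt_def.2 (by simpa using hbc), ?_, ?_⟩
      · simpa only [prependBlock_apply_add] using hab
      · simpa only [Fin.lt_def, prependBlock_apply_add] using hca
    · have h0 := prependBlock_apply_of_lt τ (x := ⟨0, by omega⟩) (by simp; omega)
      have hr := prependBlock_apply_of_lt τ (x := ⟨r, by omega⟩) hri
      have hi := prependBlock_apply_of_le τ (x := ⟨i, hin⟩) le_rfl
      have := (τ ⟨i - i, by omega⟩).isLt
      refine ⟨⟨0, by omega⟩, ⟨r, by omega⟩, ⟨i, hin⟩, by simp, Fin.lt_def.2 hri,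
        by simp only at h0 hr ⊢; omega, Fin.lt_def.2 (by simp only at h0 hi ⊢; omega)⟩

end PrependBlock

lemma exists_prependBlock_eq {i : ℕ}
    (h : ∀ x : Fin n, (x : ℕ) < i → (π x : ℕ) = n - i + x) :
    ∃ τ : Perm (Fin (n - i)), prependBlock i τ = π := by
  have hlow (x : Fin n) (hx : i ≤ (x : ℕ)) : (π x : ℕ) < n - i := by
    by_contra! hge
    have hπx := (π x).isLt
    have hy := h ⟨π x - (n - i), by omega⟩ (by simp; omega)
    have heq : π ⟨π x - (n - i), by omega⟩ = π x := Fin.ext (by rw [hy]; simp; omega)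
    have := Fin.ext_iff.1 (π.injective heq)
    simp only at this
    omega
  refine ⟨Equiv.ofBijective (fun y => ⟨π ⟨y + i, by omega⟩, hlow _ (by simp)⟩)
    (Finite.injective_iff_bijective.1 fun y z hyz => ?_), Equiv.ext fun x => Fin.ext ?_⟩
  · have := Fin.mk.inj (π.injective (Fin.ext (Fin.mk.inj hyz)))
    exact Fin.ext (by omega)
  · by_cases hx : (x : ℕ) < i
    · rw [prependBlock_apply_of_lt _ hx, h x hx]
    · rw [prependBlock_apply_of_le _ (not_lt.1 hx)]
      simp only [ofBijective_apply, Nat.sub_add_cancel (not_lt.1 hx)]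

lemma IsReverseLayered.apply_of_lt_sub (hπ : IsReverseLayered π) (h0 : 0 < n)
    {x : Fin n} (hx : (x : ℕ) < n - π ⟨0, h0⟩) : (π x : ℕ) = π ⟨0, h0⟩ + x := by
  obtain ⟨p, hp⟩ := π.surjective ⟨π ⟨0, h0⟩ + x, by omega⟩
  suffices p = x by subst this; simp [hp]
  by_cases hp0 : (p : ℕ) = 0
  · have : π p = π ⟨0, h0⟩ := by rw [show p = ⟨0, h0⟩ from Fin.ext hp0]
    rw [hp, Fin.ext_iff] at this
    exact Fin.ext (by simp at this; omega)
  · have hx0 : (x : ℕ) ≠ 0 := fun hx0 => hp0 (by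
      have := π.injective (hp.trans (Fin.ext (by simp [hx0])) : π p = π ⟨0, h0⟩)
      simpa using congrArg Fin.val this)
    have := hπ ⟨0, h0⟩ p (Fin.lt_def.2 (by simp; omega)) (by rw [hp, Fin.lt_def]; simp; omega)
    rw [hp] at this
    exact Fin.ext (by simp at this; omega)

lemma IsReverseLayered.exists_prependBlock_eq (hπ : IsReverseLayered π) (h0 : 0 < n) :
    ∃ τ : Perm (Fin (n - (n - π ⟨0, h0⟩))), prependBlock (n - π ⟨0, h0⟩) τ = π :=
  Perm.exists_prependBlock_eq fun x hx => by
    have := (π ⟨0, h0⟩).isLt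
    rw [hπ.apply_of_lt_sub h0 (by omega)]
    omega

open scoped Classical in
noncomputable def boundedLayered (r n : ℕ) : Finset (Perm (Fin n)) :=
  {π | IsReverseLayered π ∧ ¬ HasRunThenDrop π r}

variable {r : ℕ}

lemma mem_boundedLayered :
    π ∈ boundedLayered r n ↔ IsReverseLayered π ∧ ¬ HasRunThenDrop π r := by
  simp [boundedLayered]

lemma prependBlock_mem_boundedLayered {i : ℕ} {τ : Perm (Fin (n - i))}
    (hi : i ≤ r ∨ n ≤ i) :
    prependBlock i τ ∈ boundedLayered r n ↔ τ ∈ boundedLayered r (n - i) := by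
  have : ¬ (r < i ∧ i < n) := by omega
  simp only [mem_boundedLayered, isReverseLayered_prependBlock_iff,
    hasRunThenDrop_prependBlock_iff, this, or_false]

lemma card_boundedLayered_zero : #(boundedLayered r 0) = 1 := by
  simp [boundedLayered, IsReverseLayered, HasRunThenDrop]

lemma boundedLayered_eq_biUnion (hrn : r < n) :
    boundedLayered r n = (insert n (Icc 1 r)).biUnion
      fun i => (boundedLayered r (n - i)).map ⟨prependBlock i, prependBlock_injective⟩ := by
  ext π
  simp only [mem_biUnion, mem_insert, mem_Icc, mem_map, Function.Embedding.coeFn_mk]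
  constructor
  · intro hπ
    have h0 : 0 < n := by omega
    obtain ⟨τ, hτ⟩ := (mem_boundedLayered.1 hπ).1.exists_prependBlock_eq h0
    have := (π ⟨0, h0⟩).isLt
    rw [← hτ, mem_boundedLayered, isReverseLayered_prependBlock_iff,
      hasRunThenDrop_prependBlock_iff, not_or] at hπ
    exact ⟨_, by omega, τ, mem_boundedLayered.2 ⟨hπ.1, hπ.2.1⟩, hτ⟩
  · rintro ⟨i, hi, τ, hτ, rfl⟩
    exact (prependBlock_mem_boundedLayered (by omega)).2 hτ

theorem card_boundedLayered (hrn : r < n) :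
    #(boundedLayered r n) = 1 + ∑ i ∈ Icc 1 r, #(boundedLayered r (n - i)) := by
  have hdisj : Set.PairwiseDisjoint ↑(insert n (Icc 1 r))
      fun i => (boundedLayered r (n - i)).map ⟨prependBlock i, prependBlock_injective⟩ := by
    intro i hi j hj hij
    simp only [Function.onFun, disjoint_left, mem_map, Function.Embedding.coeFn_mk]
    rintro _ ⟨τ, -, rfl⟩ ⟨τ', -, h⟩
    simp only [coe_insert, coe_Icc, Set.mem_insert_iff, Set.mem_Icc] at hi hj
    have := congrArg (fun σ : Perm (Fin n) => (σ ⟨0, by omega⟩ : ℕ)) h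
    rw [prependBlock_apply_of_lt τ (show 0 < i by omega),
      prependBlock_apply_of_lt τ' (show 0 < j by omega)] at this
    omega
  rw [boundedLayered_eq_biUnion hrn, card_biUnion hdisj, sum_insert (by simp; omega), card_map,
    Nat.sub_self, card_boundedLayered_zero]
  simp only [card_map]

theorem avoidCount_eq_card_boundedLayered (r : ℕ) :
    AvoidCount [[1, 3, 2], [2, 1, 3], (List.range (r + 1)).map (· + 2) ++ [1]] n
      = #(boundedLayered r n) := by
  have hiff (π : Perm (Fin n)) :
      (∀ s ∈ [[1, 3, 2], [2, 1, 3], (List.range (r + 1)).map (· + 2) ++ [1]],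
        AvoidsPat π s) ↔ π ∈ boundedLayered r n := by
    simp only [List.mem_cons, List.not_mem_nil, or_false, forall_eq_or_imp, forall_eq,
      mem_boundedLayered, ← and_assoc, ← isReverseLayered_iff]
    exact and_congr_right fun hπ => hπ.avoidsPat_runDropPattern_iff r
  rw [AvoidCount, Nat.card_congr (Equiv.subtypeEquivRight hiff), Nat.card_eq_fintype_card,
    Fintype.card_coe]

end Equiv.Perm

theorem avoid_132_213_23k1_recurrence (k n : ℕ) (hk : 3 ≤ k) (hn : k - 1 ≤ n) :
    AvoidCount [[1, 3, 2], [2, 1, 3], ((List.range (k - 1)).map (· + 2)) ++ [1]] n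
      = 1 + ∑ i ∈ Finset.Icc 1 (k - 2),
          AvoidCount [[1, 3, 2], [2, 1, 3], ((List.range (k - 1)).map (· + 2)) ++ [1]]
            (n - i) := by
  obtain ⟨r, rfl⟩ : ∃ r, k = r + 2 := ⟨k - 2, by omega⟩
  rw [show r + 2 - 1 = r + 1 from rfl, Nat.add_sub_cancel]
  simp only [Equiv.Perm.avoidCount_eq_card_boundedLayered]
  exact Equiv.Perm.card_boundedLayered (by omega)
end

section
/- For all k ≥ 2 and all n ≥ 1, the number of permutations of [n] avoiding 132, 213, and 23…k1 equals Σ_{i=1}^n F_{k-2,i}, where F_{k-2,i} denotes the (k−2)-generalized Fibonacci numbers. -/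
/-!
Avoiding `132` and `213` means that along every ascent `i < j` the values grow exactly as fast as
the positions, `π j - π i = j - i`: the permutation is a sequence of layers, increasing runs of
consecutive values, each layer lying below the previous one. In such a permutation an occurrence
of `23…k1` is a layer of at least `k - 1` entries followed by a smaller value, so the pattern is
avoided exactly when every layer but the last has at most `k - 2` entries. Cutting off the first
layer, of length `c`, leaves a permutation of the same kind on `n - c` letters, and `c ≤ k - 2`
unless `c = n`. Hence the counts satisfy `a (n + 1) = 1 + ∑_{1 ≤ c ≤ min (k - 2) n} a (n + 1 - c)`,
the `1` counting the identity, and the partial sums of `F_{k-2}` satisfy the same recursion.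
-/

open Equiv Finset

section Patterns

variable {n : ℕ} {π : Perm (Fin n)}

def IsReverseLayered (π : Perm (Fin n)) : Prop :=
  ∀ i j, i ≤ j → π i ≤ π j → (π j : ℕ) + i = π i + j

/-- For a reverse layered `π`, `p ≤ r` with `π p ≤ π r` puts `p` and `r` in one layer, and `q`
shows that this layer is not the last one: so every layer but the last has at most `K` entries. -/
def ShortNonfinalLayers (K : ℕ) (π : Perm (Fin n)) : Prop :=
  ∀ p r q, p ≤ r → r < q → π p ≤ π r → π q < π p → (r : ℕ) < p + K

theorem IsReverseLayered.val_eq_of_mem_run (hπ : IsReverseLayered π) {p t r : Fin n}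
    (hpt : p ≤ t) (htr : t ≤ r) (hpr : π p ≤ π r) : (π t : ℕ) + p = π p + t := by
  have hrun := hπ p r (hpt.trans htr) hpr
  by_cases hle : π p ≤ π t
  · exact hπ p t hpt hle
  · have := hπ t r htr ((not_le.mp hle).le.trans hpr)
    rw [Fin.le_def] at hpt htr hpr hle
    omega

theorem avoidsPat_triple_iff {a b c : ℕ} :
    AvoidsPat π [a, b, c] ↔ ∀ x y z : Fin n, x < y → y < z →
      ¬ ((a < b ↔ π x < π y) ∧ (b < a ↔ π y < π x) ∧ (a < c ↔ π x < π z) ∧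
        (c < a ↔ π z < π x) ∧ (b < c ↔ π y < π z) ∧ (c < b ↔ π z < π y)) := by
  refine ⟨fun h x y z hxy hyz hord => h ⟨OrderEmbedding.ofStrictMono ![x, y, z] ?_, ?_⟩,
    fun h ⟨f, hf⟩ => h _ _ _ (f.strictMono (by decide : (0 : Fin 3) < 1))
      (f.strictMono (by decide : (1 : Fin 3) < 2))
      ⟨hf 0 1, hf 1 0, hf 0 2, hf 2 0, hf 1 2, hf 2 1⟩⟩
  · intro i j hij
    fin_cases i <;> fin_cases j <;> simp_all [hxy.trans hyz]
  · obtain ⟨h01, h10, h02, h20, h12, h21⟩ := hord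
    intro i j
    fin_cases i <;> fin_cases j <;> first | exact iff_of_false (lt_irrefl _) (lt_irrefl _) | assumption

theorem avoidsPat_132_iff :
    AvoidsPat π [1, 3, 2] ↔ ∀ x y z : Fin n, x < y → y < z → π x < π z → π y ≤ π z := by
  simp only [avoidsPat_triple_iff]
  refine forall₅_congr fun x y z _ _ => ?_
  grind

theorem avoidsPat_213_iff :
    AvoidsPat π [2, 1, 3] ↔ ∀ x y z : Fin n, x < y → y < z → π x < π z → π x ≤ π y := by
  simp only [avoidsPat_triple_iff]
  refine forall₅_congr fun x y z _ _ => ?_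
  grind

theorem isReverseLayered_iff_avoidsPat :
    IsReverseLayered π ↔ AvoidsPat π [1, 3, 2] ∧ AvoidsPat π [2, 1, 3] := by
  rw [avoidsPat_132_iff, avoidsPat_213_iff]
  constructor
  · intro hπ
    refine ⟨fun x y z hxy hyz hxz => ?_, fun x y z hxy hyz hxz => ?_⟩
    · by_contra! hzy
      have := hπ x z (hxy.trans hyz).le hxz.le
      have := hπ x y hxy.le (hxz.trans hzy).le
      simp only [Fin.lt_def] at *
      omega
    · by_contra! hyx
      have := hπ x z (hxy.trans hyz).le hxz.le
      have := hπ y z hyz.le (hyx.trans hxz).le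
      simp only [Fin.lt_def] at *
      omega
  · rintro ⟨h132, h213⟩ i j hij hle
    rcases hij.eq_or_lt with rfl | hij
    · rfl
    have hlt : π i < π j := lt_of_le_of_ne hle (π.injective.ne hij.ne)
    -- `π` maps the positions strictly between `i` and `j` onto the values strictly between
    -- `π i` and `π j`, so both gaps are equal.
    have hmem : ∀ t, t ∈ Ioo i j ↔ π t ∈ Ioo (π i) (π j) := by
      intro t
      simp only [Finset.mem_Ioo]
      constructor
      · rintro ⟨hit, htj⟩
        exact ⟨lt_of_le_of_ne (h213 i t j hit htj hlt) (π.injective.ne hit.ne),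
          lt_of_le_of_ne (h132 i t j hit htj hlt) (π.injective.ne htj.ne)⟩
      · rintro ⟨hit, htj⟩
        constructor
        · by_contra! hti
          have hti : t < i := lt_of_le_of_ne hti (by rintro rfl; exact hit.ne rfl)
          exact (h213 t i j hti hij htj).not_gt hit
        · by_contra! hjt
          have hjt : j < t := lt_of_le_of_ne hjt (by rintro rfl; exact htj.ne rfl)
          exact (h132 i j t hij hjt hit).not_gt htj
    have hcard := Finset.card_equiv π hmem
    rw [Fin.card_Ioo, Fin.card_Ioo] at hcard
    rw [Fin.lt_def] at hij hlt
    omega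

theorem OrderEmbedding.fin_val_add_sub_le {L : ℕ} (f : Fin L ↪o Fin n) {i j : Fin L}
    (hij : i ≤ j) : (f i : ℕ) + (j - i) ≤ f j := by
  have hsub : (Icc i j).map f.toEmbedding ⊆ Icc (f i) (f j) := by
    intro x hx
    obtain ⟨t, ht, rfl⟩ := Finset.mem_map.mp hx
    rw [Finset.mem_Icc] at ht ⊢
    exact ⟨f.monotone ht.1, f.monotone ht.2⟩
  have := Finset.card_le_card hsub
  rw [Finset.card_map, Fin.card_Icc, Fin.card_Icc] at this
  have := f.monotone hij
  rw [Fin.le_def] at this hij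
  omega

def risingThenOne (K : ℕ) : List ℕ := (List.range (K + 1)).map (· + 2) ++ [1]

@[simp]
theorem length_risingThenOne (K : ℕ) : (risingThenOne K).length = K + 2 := by
  simp [risingThenOne]

theorem getElem_risingThenOne {K i : ℕ} (hi : i < (risingThenOne K).length) :
    (risingThenOne K)[i] = if i ≤ K then i + 2 else 1 := by
  simp only [risingThenOne, List.getElem_append, List.length_map, List.length_range,
    List.getElem_map, List.getElem_range, List.getElem_singleton]
  split_ifs <;> first | rfl | omega

theorem IsReverseLayered.not_avoidsPat_risingThenOne (hπ : IsReverseLayered π) {K : ℕ}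
    {p r q : Fin n} (hpr : (p : ℕ) + K ≤ r) (hrq : r < q) (hle : π p ≤ π r) (hlt : π q < π p) :
    ¬ AvoidsPat π (risingThenOne K) := by
  rw [Fin.lt_def] at hrq hlt
  let g : Fin (risingThenOne K).length → Fin n := fun i =>
    if h : (i : ℕ) ≤ K then ⟨p + i, by omega⟩ else q
  have hgval : ∀ i, (g i : ℕ) = if (i : ℕ) ≤ K then (p : ℕ) + i else q := fun i => by
    simp only [g]
    split_ifs <;> rfl
  have hg : StrictMono g := by
    intro i j hij
    have := j.isLt
    simp only [length_risingThenOne] at this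
    rw [Fin.lt_def] at hij
    rw [Fin.lt_def, hgval, hgval]
    split_ifs <;> omega
  have hval : ∀ i, (π (g i) : ℕ) = if (i : ℕ) ≤ K then (π p : ℕ) + i else π q := by
    intro i
    have hgi := hgval i
    split_ifs at hgi ⊢ with hi
    · have := hπ.val_eq_of_mem_run (t := g i) (Fin.le_def.mpr (by omega))
        (Fin.le_def.mpr (by omega)) hle
      omega
    · rw [Fin.ext hgi]
  refine fun havoid => havoid ⟨OrderEmbedding.ofStrictMono g hg, fun i j => ?_⟩
  simp only [OrderEmbedding.coe_ofStrictMono, List.get_eq_getElem, getElem_risingThenOne,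
    Fin.lt_def, hval]
  split_ifs <;> omega

theorem IsReverseLayered.avoidsPat_risingThenOne_iff (hπ : IsReverseLayered π) (K : ℕ) :
    AvoidsPat π (risingThenOne K) ↔ ShortNonfinalLayers K π := by
  refine ⟨fun havoid p r q hpr hrq hle hlt => ?_, fun hshort ⟨f, hf⟩ => ?_⟩
  · by_contra! hKr
    exact hπ.not_avoidsPat_risingThenOne hKr hrq hle hlt havoid
  · have h0 : 0 < (risingThenOne K).length := by simp
    have hK : K < (risingThenOne K).length := by simp
    have hq : K + 1 < (risingThenOne K).length := by simp
    have hgap : (f ⟨0, h0⟩ : ℕ) + K ≤ f ⟨K, hK⟩ :=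
      f.fin_val_add_sub_le (i := ⟨0, h0⟩) (j := ⟨K, hK⟩) (Fin.le_def.mpr (Nat.zero_le K))
    have hpr : π (f ⟨0, h0⟩) ≤ π (f ⟨K, hK⟩) := not_lt.mp fun h => by
      have := (hf ⟨K, hK⟩ ⟨0, h0⟩).mpr h
      simp [getElem_risingThenOne] at this
    have hqp : π (f ⟨K + 1, hq⟩) < π (f ⟨0, h0⟩) :=
      (hf ⟨K + 1, hq⟩ ⟨0, h0⟩).mp (by simp [getElem_risingThenOne])
    have := hshort _ _ _ (f.monotone (Fin.le_def.mpr (Nat.zero_le K)))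
      (f.strictMono (Fin.lt_def.mpr (Nat.lt_succ_self K))) hpr hqp
    omega

end Patterns

section HeadBlock

variable {c m : ℕ}

/-- The permutation with one-line notation `m, m + 1, …, m + c - 1` followed by `σ`. -/
def headBlock (c : ℕ) (σ : Perm (Fin m)) : Perm (Fin (c + m)) :=
  finSumFinEquiv.symm.trans <| (Equiv.sumCongr (Equiv.refl (Fin c)) σ).trans <|
    (Equiv.sumComm _ _).trans <| finSumFinEquiv.trans (finCongr (Nat.add_comm m c))

@[simp]
theorem headBlock_castAdd (σ : Perm (Fin m)) (i : Fin c) :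
    (headBlock c σ (Fin.castAdd m i) : ℕ) = m + i := by
  simp [headBlock, Nat.add_comm]

@[simp]
theorem headBlock_natAdd (σ : Perm (Fin m)) (j : Fin m) :
    (headBlock c σ (Fin.natAdd c j) : ℕ) = σ j := by
  simp [headBlock]

theorem headBlock_injective : Function.Injective (headBlock (m := m) c) := by
  intro σ τ h
  ext j
  simpa using congrArg (fun π : Perm (Fin (c + m)) => (π (Fin.natAdd c j) : ℕ)) h

theorem isReverseLayered_headBlock_iff {σ : Perm (Fin m)} :
    IsReverseLayered (headBlock c σ) ↔ IsReverseLayered σ := by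
  constructor
  · intro h a b hab hle
    have := h (Fin.natAdd c a) (Fin.natAdd c b) (by rw [Fin.le_def] at hab ⊢; simpa using hab)
      (by rw [Fin.le_def] at hle ⊢; simpa using hle)
    simp only [headBlock_natAdd, Fin.val_natAdd] at this
    omega
  · intro h i j hij hle
    induction i using Fin.addCases <;> induction j using Fin.addCases
    all_goals
      simp only [Fin.le_def, headBlock_castAdd, headBlock_natAdd, Fin.val_castAdd,
        Fin.val_natAdd] at hij hle ⊢
    case right.right a b =>
      have := h a b (Fin.le_def.mpr (by omega)) (Fin.le_def.mpr hle)
      omega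
    all_goals omega

theorem shortNonfinalLayers_headBlock_iff {σ : Perm (Fin m)} (K : ℕ) :
    ShortNonfinalLayers K (headBlock c σ) ↔ (c ≤ K ∨ m = 0) ∧ ShortNonfinalLayers K σ := by
  constructor
  · intro h
    refine ⟨?_, fun p r q hpr hrq hle hlt => ?_⟩
    · by_contra! hcK
      have := h (Fin.castAdd m ⟨0, by omega⟩) (Fin.castAdd m ⟨c - 1, by omega⟩)
        (Fin.natAdd c ⟨0, by omega⟩)
      simp only [Fin.le_def, Fin.lt_def, headBlock_castAdd, headBlock_natAdd, Fin.val_castAdd,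
        Fin.val_natAdd] at this
      omega
    · have := h (Fin.natAdd c p) (Fin.natAdd c r) (Fin.natAdd c q)
      simp only [Fin.le_def, Fin.lt_def, headBlock_natAdd, Fin.val_natAdd] at this hpr hrq hle hlt
      omega
  · rintro ⟨hc, hσ⟩ p r q hpr hrq hle hlt
    induction p using Fin.addCases <;> induction r using Fin.addCases <;>
      induction q using Fin.addCases
    all_goals
      simp only [Fin.le_def, Fin.lt_def, headBlock_castAdd, headBlock_natAdd, Fin.val_castAdd,
        Fin.val_natAdd] at hpr hrq hle hlt ⊢
    case right.right.right a b d =>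
      have := hσ a b d (Fin.le_def.mpr (by omega)) (Fin.lt_def.mpr (by omega)) hle hlt
      omega
    all_goals omega

theorem IsReverseLayered.exists_headBlock_eq {π : Perm (Fin (c + m))} (hπ : IsReverseLayered π)
    (hc : 0 < c) (h0 : (π ⟨0, by omega⟩ : ℕ) = m) : ∃ σ, headBlock c σ = π := by
  set z : Fin (c + m) := ⟨0, by omega⟩
  have hhigh : ∀ t, m ≤ (π t : ℕ) → (π t : ℕ) = m + t := fun t ht => by
    have := hπ z t (Fin.le_def.mpr (Nat.zero_le _)) ?_
    all_goals simp only [Fin.le_def, z] at *; omega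
  have htail : ∀ j : Fin m, (π (Fin.natAdd c j) : ℕ) < m := fun j => by
    by_contra! hj
    have := hhigh _ hj
    simp only [Fin.val_natAdd] at this
    omega
  have hhead : ∀ i : Fin c, (π (Fin.castAdd m i) : ℕ) = m + i := fun i => by
    set w := π.symm ⟨c + m - 1, by omega⟩
    have hw : (π w : ℕ) = c + m - 1 := by simp [w]
    have := hhigh w (by omega)
    have := hπ.val_eq_of_mem_run (p := z) (t := Fin.castAdd m i) (r := w)
      (Fin.le_def.mpr (Nat.zero_le _)) (Fin.le_def.mpr (by simp only [Fin.val_castAdd]; omega))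
      (Fin.le_def.mpr (by simp only [z]; omega))
    simp only [Fin.val_castAdd, z] at this
    omega
  let τ : Fin m → Fin m := fun j => ⟨π (Fin.natAdd c j), htail j⟩
  have hτ : Function.Injective τ := fun a b hab =>
    (Fin.natAdd_inj c).mp (π.injective (Fin.ext (Fin.mk.inj hab)))
  refine ⟨Equiv.ofBijective τ (Finite.injective_iff_bijective.mp hτ), ?_⟩
  ext i
  induction i using Fin.addCases with
  | left i => rw [headBlock_castAdd, hhead]
  | right j => rw [headBlock_natAdd]; rfl

end HeadBlock

section Counting

open Classical in
noncomputable def shortLayeredPerms (K N : ℕ) : Finset (Perm (Fin N)) :=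
  univ.filter fun π => IsReverseLayered π ∧ ShortNonfinalLayers K π

variable {K c m : ℕ}

theorem mem_shortLayeredPerms {N : ℕ} {π : Perm (Fin N)} :
    π ∈ shortLayeredPerms K N ↔ IsReverseLayered π ∧ ShortNonfinalLayers K π := by
  simp [shortLayeredPerms]

theorem card_shortLayeredPerms_zero : (shortLayeredPerms K 0).card = 1 :=
  card_eq_one.mpr ⟨1, eq_singleton_iff_unique_mem.mpr
    ⟨mem_shortLayeredPerms.mpr ⟨fun i => i.elim0, fun p => p.elim0⟩,
      fun π _ => Subsingleton.elim π 1⟩⟩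

theorem filter_shortLayeredPerms_head_eq_map (hc : 0 < c) (hcK : c ≤ K ∨ m = 0) :
    (shortLayeredPerms K (c + m)).filter (fun π => (π ⟨0, by omega⟩ : ℕ) = m) =
      (shortLayeredPerms K m).map ⟨headBlock c, headBlock_injective⟩ := by
  ext π
  simp only [mem_filter, mem_map, mem_shortLayeredPerms, Function.Embedding.coeFn_mk]
  constructor
  · rintro ⟨⟨hrl, hshort⟩, h0⟩
    obtain ⟨σ, rfl⟩ := hrl.exists_headBlock_eq hc h0
    exact ⟨σ, ⟨isReverseLayered_headBlock_iff.mp hrl,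
      ((shortNonfinalLayers_headBlock_iff K).mp hshort).2⟩, rfl⟩
  · rintro ⟨σ, ⟨hrl, hshort⟩, rfl⟩
    exact ⟨⟨isReverseLayered_headBlock_iff.mpr hrl,
      (shortNonfinalLayers_headBlock_iff K).mpr ⟨hcK, hshort⟩⟩, headBlock_castAdd σ ⟨0, hc⟩⟩

theorem card_filter_shortLayeredPerms_head {N : ℕ} (hN : c + m = N) (hc : 0 < c) :
    ((shortLayeredPerms K N).filter fun π => (π ⟨0, by omega⟩ : ℕ) = m).card =
      if c ≤ K ∨ m = 0 then (shortLayeredPerms K m).card else 0 := by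
  subst hN
  split_ifs with hcK
  · rw [filter_shortLayeredPerms_head_eq_map hc hcK, card_map]
  · refine card_eq_zero.mpr (filter_eq_empty_iff.mpr fun π hπ h0 => ?_)
    obtain ⟨hrl, hshort⟩ := mem_shortLayeredPerms.mp hπ
    obtain ⟨σ, rfl⟩ := hrl.exists_headBlock_eq hc h0
    exact hcK ((shortNonfinalLayers_headBlock_iff K).mp hshort).1

end Counting

theorem sum_genFib_succ (K n : ℕ) :
    ∑ i ∈ Icc 1 (n + 1), genFib K i = 1 + ∑ c ∈ range K, ∑ i ∈ Icc 1 (n - c), genFib K i := by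
  induction n with
  | zero => simp [genFib]
  | succ n ih =>
    have hstep : ∀ c ∈ range K, ∑ i ∈ Icc 1 (n + 1 - c), genFib K i =
        ∑ i ∈ Icc 1 (n - c), genFib K i + genFib K (n + 1 - c) := fun c _ => by
      rcases le_or_gt c n with hcn | hnc
      · rw [Nat.sub_add_comm hcn, sum_Icc_succ_top (by omega)]
      · simp [Nat.sub_eq_zero_of_le hnc, Nat.sub_eq_zero_of_le hnc.le, genFib]
    rw [sum_Icc_succ_top (by omega), ih, genFib, sum_congr rfl hstep, sum_add_distrib, add_assoc]

theorem card_shortLayeredPerms (K n : ℕ) :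
    (shortLayeredPerms K (n + 1)).card = ∑ i ∈ Icc 1 (n + 1), genFib K i := by
  induction n using Nat.strong_induction_on with
  | _ n ih =>
  -- Split by the first value `n - c`, i.e. by the length `c + 1` of the first layer.
  calc (shortLayeredPerms K (n + 1)).card
      = ∑ m ∈ range (n + 1),
          ((shortLayeredPerms K (n + 1)).filter fun π => (π ⟨0, n.succ_pos⟩ : ℕ) = m).card :=
        card_eq_sum_card_fiberwise fun π _ => mem_range.mpr (π _).isLt
    _ = ∑ c ∈ range (n + 1),
          ((shortLayeredPerms K (n + 1)).filter fun π => (π ⟨0, n.succ_pos⟩ : ℕ) = n - c).card :=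
        (sum_range_reflect _ _).symm
    _ = ∑ c ∈ range n, (if c < K then ∑ i ∈ Icc 1 (n - c), genFib K i else 0) + 1 := by
        rw [sum_range_succ, Nat.sub_self, card_filter_shortLayeredPerms_head (c := n + 1)
          (by omega) n.succ_pos, if_pos (Or.inr rfl), card_shortLayeredPerms_zero]
        refine congrArg (· + 1) (sum_congr rfl fun c hc => ?_)
        rw [mem_range] at hc
        rw [card_filter_shortLayeredPerms_head (c := c + 1) (by omega) c.succ_pos,
          show n - c = n - c - 1 + 1 by omega, ih (n - c - 1) (by omega)]
        simp only [Nat.succ_le_iff, Nat.add_one_ne_zero, or_false]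
    _ = ∑ c ∈ range K, ∑ i ∈ Icc 1 (n - c), genFib K i + 1 := by
        rw [← sum_filter]
        refine congrArg (· + 1) (sum_subset (fun c hc => by simp_all) fun c hc hc' => ?_)
        simp_all [Nat.sub_eq_zero_of_le]
    _ = ∑ i ∈ Icc 1 (n + 1), genFib K i := by rw [sum_genFib_succ, add_comm]

theorem forall_avoidsPat_iff_mem_shortLayeredPerms {N : ℕ} (π : Perm (Fin N)) (K : ℕ) :
    (∀ s ∈ [[1, 3, 2], [2, 1, 3], risingThenOne K], AvoidsPat π s) ↔
      π ∈ shortLayeredPerms K N := by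
  simp only [List.forall_mem_cons, List.not_mem_nil, IsEmpty.forall_iff, implies_true, and_true,
    mem_shortLayeredPerms, ← and_assoc, ← isReverseLayered_iff_avoidsPat]
  exact and_congr_right fun h => h.avoidsPat_risingThenOne_iff K

theorem avoid_132_213_23k1_eq_sum_genFib (k n : ℕ) (hk : 2 ≤ k) (hn : 1 ≤ n) :
    AvoidCount [[1, 3, 2], [2, 1, 3], ((List.range (k - 1)).map (· + 2)) ++ [1]] n
      = ∑ i ∈ Finset.Icc 1 n, genFib (k - 2) i := by
  obtain ⟨K, rfl⟩ : ∃ K, k = K + 2 := ⟨k - 2, by omega⟩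
  obtain ⟨n, rfl⟩ : ∃ n', n = n' + 1 := ⟨n - 1, by omega⟩
  calc AvoidCount [[1, 3, 2], [2, 1, 3], risingThenOne K] (n + 1)
      = Nat.card (shortLayeredPerms K (n + 1)) :=
        Nat.card_congr (Equiv.subtypeEquivRight fun π =>
          forall_avoidsPat_iff_mem_shortLayeredPerms π K)
    _ = ∑ i ∈ Icc 1 (n + 1), genFib K i := by
        rw [Nat.card_eq_finsetCard, card_shortLayeredPerms]
end
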